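/- Let A be an abelian surface and E an elliptic curve over an algebraically closed field of characteristic 0, and let φ = [1] × [4] : A × E → A × E. Then deg(φ) = 16, φ fixes A × {0} pointwise, and there is no ample line bundle L on A × E with φ*L ≅ L^{⊗q} for any integer q > 1 (since otherwise deg(φ) = q^3 for some natural number q, which is impossible). -/
import Mathlib


/-!
`A` is (the group of points of) an abelian surface and `E` an elliptic curve over an
algebraically closed field of characteristic zero, so their `n`-torsion subgroups
have `n^4` resp. `n^2` points.  `φ = [1] × [4]` on `A × E`.  The Picard group of
`A × E` is modeled abstractly with pullback and ampleness; since `A × E` is a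
threefold, a polarized endomorphism with multiplier `q` has degree `q^3`
(hypothesis `hpoldeg`).  Then `deg φ = 16`, `φ` fixes `A × {0}` pointwise, and
there is no ample `L` with `φ*L ≅ L^{⊗q}` for any `q > 1`, since `16` is not a cube.
-/

theorem abelian_surface_times_elliptic_curve_not_polarizable
    (A E : Type) [AddCommGroup A] [AddCommGroup E]
    (cardA : ∀ n : ℕ, 0 < n → Nat.card {x : A // n • x = 0} = n ^ 4)
    (cardE : ∀ n : ℕ, 0 < n → Nat.card {x : E // n • x = 0} = n ^ 2)
    (φ : A × E →+ A × E) (hφ : ∀ p : A × E, φ p = (p.1, 4 • p.2))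
    (Pic : Type) [CommMonoid Pic]
    (pull : (A × E → A × E) → Pic → Pic) (ample : Pic → Prop)
    (hpoldeg : ∀ (L : Pic) (q : ℕ), ample L → 1 < q → pull φ L = L ^ q →
      Nat.card {p : A × E // φ p = 0} = q ^ 3) :
    Nat.card {p : A × E // φ p = 0} = 16 ∧
    (∀ a : A, φ (a, 0) = (a, 0)) ∧
    ¬ ∃ (L : Pic) (q : ℕ), ample L ∧ 1 < q ∧ pull φ L = L ^ q := by
  have key : ∀ p : A × E, φ p = 0 ↔ ((1:ℕ) • p.1 = 0 ∧ (4:ℕ) • p.2 = 0) := by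
    intro p
    rw [hφ, Prod.ext_iff, one_smul]
    simp
  have e : {p : A × E // φ p = 0} ≃
      {x : A // (1:ℕ) • x = 0} × {x : E // (4:ℕ) • x = 0} :=
    { toFun := fun p => (⟨p.1.1, ((key p.1).mp p.2).1⟩, ⟨p.1.2, ((key p.1).mp p.2).2⟩)
      invFun := fun q => ⟨(q.1.1, q.2.1), (key _).mpr ⟨q.1.2, q.2.2⟩⟩
      left_inv := fun p => rfl
      right_inv := fun q => rfl }
  have h16 : Nat.card {p : A × E // φ p = 0} = 16 := by
    rw [Nat.card_congr e, Nat.card_prod, cardA 1 one_pos, cardE 4 (by norm_num)]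
    norm_num
  refine ⟨h16, fun a => by rw [hφ]; simp, ?_⟩
  rintro ⟨L, q, hL, hq, hpull⟩
  have hc := hpoldeg L q hL hq hpull
  rw [h16] at hc
  rcases Nat.lt_or_ge q 3 with h3 | h3
  · interval_cases q <;> omega
  · have : 3 ^ 3 ≤ q ^ 3 := Nat.pow_le_pow_left h3 3
    omega
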